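/- Let $\Delta : (0,\infty) \to [0,\infty)$ be measurable, bounded, and vanishing for large $x$, and set $V(t) = t\int_0^\infty e^{-tx}\Delta(x)\,dx$ and $D(x) = \int_0^x \Delta(u)\,du$. Then for $v \ge 0$: $\lim_{t\to\infty} V(t) = v$ if and only if $\lim_{x\downarrow0} D(x)/x = v$. -/

import Mathlib

/-!
Abelian direction: by Fubini, `t ∫₀^∞ e^{-tx} Δ(x) dx = ∫₀^∞ e^{-s} · t D(s/t) ds`, and
`t D(s/t) → v s` with the domination `|t D(s/t)| ≤ C s`.

Tauberian direction (Karamata's method): monomials `g(y) = yᵏ` turn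
`t ∫₀^∞ g(e^{-tx}) e^{-tx} Δ(x) dx` into a rescaling of `V`, so for every polynomial `g` it tends to
`v ∫₀¹ g`. For the cutoff `g(y) = y⁻¹ 1_{y ≥ 1/e}` the same expression is `t D(1/t)`. As `Δ ≥ 0`,
it is monotone in `g`, and the cutoff lies between polynomials whose integrals over `[0, 1]` are
arbitrarily close to its own, which is `1`.
-/

open Real Set Filter MeasureTheory Topology

section Abelian

variable {Δ : ℝ → ℝ}

theorem integrableOn_Ioi_zero_of_norm_le_of_eq_zero (hΔ : AEStronglyMeasurable Δ) {C X : ℝ}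
    (hC : ∀ x, 0 < x → ‖Δ x‖ ≤ C) (hX : ∀ x, X ≤ x → Δ x = 0) : IntegrableOn Δ (Ioi 0) := by
  have hsub : Ioi 0 ⊆ Ioc 0 X ∪ Ici X := fun x (hx : 0 < x) => by
    rcases le_or_gt X x with h | h
    exacts [Or.inr h, Or.inl ⟨hx, h.le⟩]
  refine IntegrableOn.mono_set ?_ hsub
  refine (Measure.integrableOn_of_bounded measure_Ioc_lt_top.ne hΔ (M := C) ?_).union ?_
  · exact (ae_restrict_iff' measurableSet_Ioc).2 (.of_forall fun x hx => hC x hx.1)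
  · exact integrableOn_zero.congr_fun (fun x hx => (hX x hx).symm) measurableSet_Ici

theorem norm_integral_Ioc_zero_le {C : ℝ} (hC : ∀ x, 0 < x → ‖Δ x‖ ≤ C) {x : ℝ} (hx : 0 ≤ x) :
    ‖∫ u in Ioc 0 x, Δ u‖ ≤ C * x := by
  have h := norm_setIntegral_le_of_norm_le_const (measure_Ioc_lt_top (μ := volume) (a := 0) (b := x))
    fun u hu => hC u hu.1
  rwa [volume_real_Ioc_of_le hx, sub_zero] at h

theorem continuous_integral_Ioc_zero (hΔ : IntegrableOn Δ (Ioi 0)) :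
    Continuous fun x => ∫ u in Ioc 0 x, Δ u := by
  have hprim : ∀ x, ∫ u in Ioc 0 x, Δ u = ∫ u in (0)..x, (Ioi 0).indicator Δ u := by
    intro x
    rcases le_or_gt 0 x with hx | hx
    · rw [intervalIntegral.integral_of_le hx, setIntegral_indicator measurableSet_Ioi,
        Ioc_inter_Ioi, max_self]
    · rw [intervalIntegral.integral_of_ge hx.le, setIntegral_indicator measurableSet_Ioi,
        Ioc_eq_empty (not_lt.2 hx.le)]
      simp [Ioc_inter_Ioi, hx.le]
  simp_rw [hprim]
  exact intervalIntegral.continuous_primitive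
    (fun a b => (hΔ.integrable_indicator measurableSet_Ioi).intervalIntegrable) 0

theorem integrableOn_exp_neg_mul_self_Ioi : IntegrableOn (fun s => exp (-s) * s) (Ioi 0) := by
  simpa [show (2 : ℝ) - 1 = 1 by norm_num] using GammaIntegral_convergent (s := 2) two_pos

theorem integral_exp_neg_mul_self_Ioi : ∫ s in Ioi 0, exp (-s) * s = 1 := by
  simpa [show (2 : ℝ) - 1 = 1 by norm_num, Gamma_two] using
    (Gamma_eq_integral (s := 2) two_pos).symm

theorem integral_exp_neg_mul_integral_Ioc (hΔ : IntegrableOn Δ (Ioi 0)) {t : ℝ} (ht : 0 < t) :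
    ∫ s in Ioi 0, exp (-s) * ∫ u in Ioc 0 (s / t), Δ u =
      ∫ u in Ioi 0, exp (-(t * u)) * Δ u := by
  set S : Set (ℝ × ℝ) := {p | t * p.2 ≤ p.1}
  set F : ℝ × ℝ → ℝ := S.indicator fun p => exp (-p.1) * Δ p.2
  have hS : MeasurableSet S := measurableSet_le (measurable_snd.const_mul t) measurable_fst
  have hF : Integrable F ((volume.restrict (Ioi 0)).prod (volume.restrict (Ioi 0))) :=
    ((integrableOn_exp_neg_Ioi 0).mul_prod hΔ).indicator hS
  calc ∫ s in Ioi 0, exp (-s) * ∫ u in Ioc 0 (s / t), Δ u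
      = ∫ s in Ioi 0, ∫ u in Ioi 0, F (s, u) := by
        refine setIntegral_congr_fun measurableSet_Ioi fun s _ => ?_
        have hFs : ∀ u ∈ Ioi (0 : ℝ), F (s, u) = (Ioc 0 (s / t)).indicator (exp (-s) * Δ ·) u :=
          fun u (hu : 0 < u) => by
            simp only [F, S, indicator_apply, mem_ofPred_eq, mem_Ioc, hu, true_and,
              le_div_iff₀ ht, mul_comm u]
        rw [setIntegral_congr_fun measurableSet_Ioi hFs, setIntegral_indicator measurableSet_Ioc,
          inter_eq_right.2 Ioc_subset_Ioi_self, integral_const_mul]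
    _ = ∫ u in Ioi 0, ∫ s in Ioi 0, F (s, u) := integral_integral_swap hF
    _ = ∫ u in Ioi 0, exp (-(t * u)) * Δ u := by
        refine setIntegral_congr_fun measurableSet_Ioi fun u (hu : 0 < u) => ?_
        have hFu : ∀ s, F (s, u) = (Ici (t * u)).indicator (fun s => exp (-s)) s * Δ u :=
          fun s => by
            simp only [F, S, indicator_apply, mem_ofPred_eq, mem_Ici]
            split_ifs <;> simp
        simp_rw [hFu]
        rw [integral_mul_const, setIntegral_indicator measurableSet_Ici,
          inter_eq_right.2 (Ici_subset_Ioi.2 (mul_pos ht hu)), integral_Ici_eq_integral_Ioi,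
          integral_exp_neg_Ioi]

theorem tendsto_mul_integral_Ioc_div_atTop {v : ℝ}
    (hD : Tendsto (fun x => (∫ u in Ioc 0 x, Δ u) / x) (𝓝[>] 0) (𝓝 v)) {s : ℝ} (hs : 0 < s) :
    Tendsto (fun t => t * ∫ u in Ioc 0 (s / t), Δ u) atTop (𝓝 (s * v)) := by
  have hst : Tendsto (fun t : ℝ => s / t) atTop (𝓝[>] 0) :=
    tendsto_nhdsWithin_of_tendsto_nhds_of_eventually_within _
      (tendsto_const_nhds.div_atTop tendsto_id)
      (eventually_gt_atTop 0 |>.mono fun _ ht => div_pos hs ht)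
  refine ((hD.comp hst).const_mul s).congr' (eventually_gt_atTop 0 |>.mono fun t ht => ?_)
  simp only [Function.comp_apply]
  field_simp

theorem tendsto_mul_integral_exp_neg_of_tendsto_div (hΔ : IntegrableOn Δ (Ioi 0)) {C v : ℝ}
    (hC : ∀ x, 0 < x → ‖∫ u in Ioc 0 x, Δ u‖ ≤ C * x)
    (hD : Tendsto (fun x => (∫ u in Ioc 0 x, Δ u) / x) (𝓝[>] 0) (𝓝 v)) :
    Tendsto (fun t => t * ∫ x in Ioi 0, exp (-(t * x)) * Δ x) atTop (𝓝 v) := by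
  have hlim : Tendsto (fun t => ∫ s in Ioi 0, exp (-s) * (t * ∫ u in Ioc 0 (s / t), Δ u)) atTop
      (𝓝 (∫ s in Ioi 0, exp (-s) * (s * v))) := by
    refine tendsto_integral_filter_of_dominated_convergence (fun s => exp (-s) * s * C)
      (.of_forall fun t =>
        (continuous_exp.comp continuous_neg |>.mul <| continuous_const.mul <|
          (continuous_integral_Ioc_zero hΔ).comp <| continuous_id.div_const t).aestronglyMeasurable)
      ?_ (integrableOn_exp_neg_mul_self_Ioi.mul_const C) ?_
    · filter_upwards [eventually_gt_atTop 0] with t ht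
      refine (ae_restrict_iff' measurableSet_Ioi).2 (.of_forall fun s (hs : 0 < s) => ?_)
      calc ‖exp (-s) * (t * ∫ u in Ioc 0 (s / t), Δ u)‖
          = exp (-s) * (t * ‖∫ u in Ioc 0 (s / t), Δ u‖) := by
            rw [norm_mul, norm_mul, norm_of_nonneg (exp_pos _).le, norm_of_nonneg ht.le]
        _ ≤ exp (-s) * (t * (C * (s / t))) := by gcongr; exact hC _ (div_pos hs ht)
        _ = exp (-s) * s * C := by field_simp
    · exact (ae_restrict_iff' measurableSet_Ioi).2 (.of_forall fun s hs =>
        (tendsto_mul_integral_Ioc_div_atTop hD hs).const_mul _)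
  have hval : ∫ s in Ioi 0, exp (-s) * (s * v) = v := by
    simp_rw [← mul_assoc]
    rw [integral_mul_const, integral_exp_neg_mul_self_Ioi, one_mul]
  rw [hval] at hlim
  refine hlim.congr' (eventually_gt_atTop 0 |>.mono fun t ht => ?_)
  dsimp only
  rw [← integral_exp_neg_mul_integral_Ioc hΔ ht, ← integral_const_mul]
  exact integral_congr_ae (.of_forall fun s => by ring)

end Abelian

theorem exists_polynomial_le_integral_ge {a b : ℝ} (hab : a ≤ b) {f : ℝ → ℝ}
    (hf : ContinuousOn f (Icc a b)) {ε : ℝ} (hε : 0 < ε) :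
    ∃ p : Polynomial ℝ, (∀ y ∈ Icc a b, p.eval y ≤ f y) ∧
      (∫ y in a..b, f y) - ε ≤ ∫ y in a..b, p.eval y := by
  set δ := ε / (2 * (b - a + 1))
  have hδ : 0 < δ := by positivity
  obtain ⟨p, hp⟩ := exists_polynomial_near_of_continuousOn a b (fun y => f y - δ)
    (hf.sub continuousOn_const) δ hδ
  have hp' : ∀ y ∈ Icc a b, f y - 2 * δ < p.eval y ∧ p.eval y < f y := fun y hy => by
    have := abs_lt.1 (hp y hy); constructor <;> linarith
  refine ⟨p, fun y hy => (hp' y hy).2.le, ?_⟩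
  have hfi : IntervalIntegrable f volume a b :=
    (hf.mono (uIcc_of_le hab).subset).intervalIntegrable
  calc (∫ y in a..b, f y) - ε ≤ (∫ y in a..b, f y) - (b - a) * (2 * δ) := by
        gcongr
        calc (b - a) * (2 * δ) = ε * ((b - a) / (b - a + 1)) := by simp only [δ]; field_simp
          _ ≤ ε := mul_le_of_le_one_right hε.le ((div_le_one (by linarith)).2 (by linarith))
    _ = ∫ y in a..b, (f y - 2 * δ) := by
        rw [intervalIntegral.integral_sub hfi intervalIntegrable_const,
          intervalIntegral.integral_const, smul_eq_mul]
    _ ≤ ∫ y in a..b, p.eval y :=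
        intervalIntegral.integral_mono_on hab (hfi.sub intervalIntegrable_const)
          (p.continuous.intervalIntegrable a b) fun y hy => (hp' y hy).1.le

theorem exists_polynomial_ge_integral_le {a b : ℝ} (hab : a ≤ b) {f : ℝ → ℝ}
    (hf : ContinuousOn f (Icc a b)) {ε : ℝ} (hε : 0 < ε) :
    ∃ p : Polynomial ℝ, (∀ y ∈ Icc a b, f y ≤ p.eval y) ∧
      ∫ y in a..b, p.eval y ≤ (∫ y in a..b, f y) + ε := by
  obtain ⟨p, hle, hint⟩ := exists_polynomial_le_integral_ge hab hf.neg hε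
  refine ⟨-p, fun y hy => by simpa using neg_le_neg (hle y hy), ?_⟩
  simp only [Pi.neg_apply, Polynomial.eval_neg, intervalIntegral.integral_neg] at hint ⊢
  linarith

noncomputable def rampInv (c η y : ℝ) : ℝ := min 1 (max 0 ((y - c) / η)) * (max y c)⁻¹

section RampInv

variable {c η : ℝ}

theorem continuous_rampInv (hc : 0 < c) : Continuous (rampInv c η) :=
  (by fun_prop : Continuous fun y => min 1 (max 0 ((y - c) / η))).mul <|
    (continuous_id.max continuous_const).inv₀ fun y => (hc.trans_le (le_max_right y c)).ne'

theorem rampInv_nonneg (hc : 0 ≤ c) (y : ℝ) : 0 ≤ rampInv c η y :=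
  mul_nonneg (le_min zero_le_one (le_max_left _ _)) (inv_nonneg.2 (hc.trans (le_max_right _ _)))

theorem rampInv_of_le (hη : 0 < η) {y : ℝ} (hy : y ≤ c) : rampInv c η y = 0 := by
  rw [rampInv, max_eq_left (div_nonpos_of_nonpos_of_nonneg (sub_nonpos.2 hy) hη.le),
    min_eq_right zero_le_one, zero_mul]

theorem rampInv_of_add_le (hη : 0 < η) {y : ℝ} (hy : c + η ≤ y) : rampInv c η y = y⁻¹ := by
  rw [rampInv, min_eq_left (le_max_of_le_right ((one_le_div hη).2 (by linarith))),
    max_eq_left (by linarith), one_mul]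

theorem rampInv_le_inv (hc : 0 < c) {y : ℝ} (hy : c ≤ y) : rampInv c η y ≤ y⁻¹ := by
  rw [rampInv, max_eq_left hy]
  exact mul_le_of_le_one_left (inv_nonneg.2 (hc.trans_le hy).le) (min_le_left _ _)

theorem neg_log_le_integral_rampInv (hc : 0 < c) (hη : 0 < η) (h1 : c + η ≤ 1) :
    -log (c + η) ≤ ∫ y in (0)..1, rampInv c η y := by
  have hint a b := (continuous_rampInv (η := η) hc).intervalIntegrable (μ := volume) a b
  have hzero : (0 : ℝ) ∉ uIcc (c + η) 1 := by rw [uIcc_of_le h1]; exact fun h => by linarith [h.1]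
  have htail : ∫ y in (c + η)..1, rampInv c η y = -log (c + η) := by
    rw [intervalIntegral.integral_congr fun y hy => rampInv_of_add_le hη (uIcc_of_le h1 ▸ hy).1,
      integral_inv hzero, log_div one_ne_zero (by linarith), log_one, zero_sub]
  rw [← intervalIntegral.integral_add_adjacent_intervals (hint 0 (c + η)) (hint (c + η) 1),
    htail, le_add_iff_nonneg_left]
  exact intervalIntegral.integral_nonneg (by linarith) fun y _ => rampInv_nonneg hc.le y

theorem integral_rampInv_le_neg_log (hc : 0 < c) (hη : 0 < η) (h1 : c ≤ 1) :
    ∫ y in (0)..1, rampInv c η y ≤ -log c := by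
  have hint a b := (continuous_rampInv (η := η) hc).intervalIntegrable (μ := volume) a b
  have hzero : (0 : ℝ) ∉ uIcc c 1 := by rw [uIcc_of_le h1]; exact fun h => hc.not_ge h.1
  rw [← intervalIntegral.integral_add_adjacent_intervals (hint 0 c) (hint c 1),
    intervalIntegral.integral_congr fun y hy => rampInv_of_le hη (uIcc_of_le hc.le ▸ hy).2,
    intervalIntegral.integral_zero, zero_add]
  calc ∫ y in c..1, rampInv c η y ≤ ∫ y in c..1, y⁻¹ :=
        intervalIntegral.integral_mono_on h1 (hint c 1)
          (continuousOn_inv₀.mono fun y hy h0 => hzero (h0 ▸ hy)).intervalIntegrable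
          fun y hy => rampInv_le_inv hc hy.1
    _ = -log c := by rw [integral_inv hzero, log_div one_ne_zero hc.ne', log_one, zero_sub]

end RampInv

noncomputable def karamataCutoff : ℝ → ℝ := (Ici (exp (-1))).indicator fun y => y⁻¹

theorem exists_continuous_sandwich_karamataCutoff {ε : ℝ} (hε : 0 < ε) :
    ∃ l u : ℝ → ℝ, Continuous l ∧ Continuous u ∧ l ≤ karamataCutoff ∧ karamataCutoff ≤ u ∧
      1 - ε ≤ ∫ y in (0)..1, l y ∧ ∫ y in (0)..1, u y ≤ 1 + ε := by
  set a := exp (-1)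
  have ha : 0 < a := exp_pos _
  have ha2 : a ≤ 1 / 2 := (exp_neg_one_lt_d9.trans_le (by norm_num)).le
  obtain ⟨δ, hδ, hlog⟩ := Metric.continuousAt_iff.1 (continuousAt_log ha.ne') ε hε
  set η := min (δ / 2) (a / 2)
  have hη : 0 < η := by positivity
  have hηδ : η < δ := (min_le_left _ _).trans_lt (half_lt_self hδ)
  have hηa : η ≤ a / 2 := min_le_right _ _
  have hlog_near : ∀ y, |y - a| ≤ η → |log y + 1| < ε := fun y hy => by
    simpa [a, Real.dist_eq] using hlog (x := y) (by rw [Real.dist_eq]; linarith)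
  refine ⟨rampInv a η, rampInv (a - η) η, continuous_rampInv ha,
    continuous_rampInv (by linarith), fun y => ?_, fun y => ?_, ?_, ?_⟩
  · rcases lt_or_ge y a with hy | hy
    · rw [karamataCutoff, indicator_of_notMem (notMem_Ici.2 hy), rampInv_of_le hη hy.le]
    · rw [karamataCutoff, indicator_of_mem (mem_Ici.2 hy)]
      exact rampInv_le_inv ha hy
  · rcases lt_or_ge y a with hy | hy
    · rw [karamataCutoff, indicator_of_notMem (notMem_Ici.2 hy)]
      exact rampInv_nonneg (by linarith) y
    · rw [karamataCutoff, indicator_of_mem (mem_Ici.2 hy), rampInv_of_add_le hη (by linarith)]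
  · have := abs_lt.1 (hlog_near (a + η) (by simp [abs_of_pos hη]))
    linarith [neg_log_le_integral_rampInv ha hη (by linarith)]
  · have := abs_lt.1 (hlog_near (a - η) (by simp [abs_of_pos hη]))
    linarith [integral_rampInv_le_neg_log (by linarith : 0 < a - η) hη (by linarith)]

theorem exists_polynomial_sandwich_karamataCutoff {ε : ℝ} (hε : 0 < ε) :
    ∃ p q : Polynomial ℝ,
      (∀ y ∈ Icc (0 : ℝ) 1, p.eval y ≤ karamataCutoff y ∧ karamataCutoff y ≤ q.eval y) ∧
      1 - ε ≤ ∫ y in (0)..1, p.eval y ∧ ∫ y in (0)..1, q.eval y ≤ 1 + ε := by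
  obtain ⟨l, u, hl, hu, hlK, hKu, hil, hiu⟩ :=
    exists_continuous_sandwich_karamataCutoff (half_pos hε)
  obtain ⟨p, hp, hip⟩ := exists_polynomial_le_integral_ge zero_le_one hl.continuousOn (half_pos hε)
  obtain ⟨q, hq, hiq⟩ := exists_polynomial_ge_integral_le zero_le_one hu.continuousOn (half_pos hε)
  exact ⟨p, q, fun y hy => ⟨(hp y hy).trans (hlK y), (hKu y).trans (hq y hy)⟩,
    by linarith, by linarith⟩

noncomputable def karamataTransform (Δ g : ℝ → ℝ) (t : ℝ) : ℝ :=
  t * ∫ x in Ioi 0, g (exp (-(t * x))) * exp (-(t * x)) * Δ x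

section Karamata

variable {Δ : ℝ → ℝ} {t : ℝ}

theorem exp_neg_mul_mem_Ioc (ht : 0 ≤ t) {x : ℝ} (hx : 0 < x) : exp (-(t * x)) ∈ Ioc 0 1 :=
  ⟨exp_pos _, exp_le_one_iff.2 (neg_nonpos.2 (mul_nonneg ht hx.le))⟩

theorem integrableOn_karamata_integrand (hΔ : IntegrableOn Δ (Ioi 0)) {g : ℝ → ℝ}
    (hg : Continuous g) (ht : 0 ≤ t) :
    IntegrableOn (fun x => g (exp (-(t * x))) * exp (-(t * x)) * Δ x) (Ioi 0) := by
  obtain ⟨M, hM⟩ := isCompact_Icc.exists_bound_of_continuousOn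
    (hg.mul continuous_id).continuousOn (s := Icc (0 : ℝ) 1)
  refine hΔ.bdd_mul (c := M) (by fun_prop)
    ((ae_restrict_iff' measurableSet_Ioi).2 (.of_forall fun x hx => ?_))
  exact hM _ (Ioc_subset_Icc_self (exp_neg_mul_mem_Ioc ht hx))

theorem karamataTransform_mono (hΔ₀ : ∀ x, 0 ≤ Δ x) {g₁ g₂ : ℝ → ℝ}
    (h₁ : IntegrableOn (fun x => g₁ (exp (-(t * x))) * exp (-(t * x)) * Δ x) (Ioi 0))
    (h₂ : IntegrableOn (fun x => g₂ (exp (-(t * x))) * exp (-(t * x)) * Δ x) (Ioi 0))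
    (hg : ∀ y ∈ Ioc 0 1, g₁ y ≤ g₂ y) (ht : 0 ≤ t) :
    karamataTransform Δ g₁ t ≤ karamataTransform Δ g₂ t := by
  refine mul_le_mul_of_nonneg_left
    (setIntegral_mono_on h₁ h₂ measurableSet_Ioi fun x hx => ?_) ht
  have hy := exp_neg_mul_mem_Ioc ht hx
  exact mul_le_mul_of_nonneg_right (mul_le_mul_of_nonneg_right (hg _ hy) hy.1.le) (hΔ₀ x)

theorem tendsto_karamataTransform_pow {v : ℝ}
    (hV : Tendsto (fun t => t * ∫ x in Ioi 0, exp (-(t * x)) * Δ x) atTop (𝓝 v)) (n : ℕ) :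
    Tendsto (karamataTransform Δ (· ^ n)) atTop (𝓝 (v / (n + 1))) := by
  have hn : (0 : ℝ) < n + 1 := by positivity
  refine ((hV.comp (tendsto_id.const_mul_atTop hn)).div_const (n + 1)).congr fun t => ?_
  have he : ∀ x, exp (-(t * x)) ^ n * exp (-(t * x)) = exp (-((n + 1) * t * x)) := fun x => by
    rw [← exp_nat_mul, ← exp_add]; ring_nf
  simp only [karamataTransform, Function.comp_apply, id, he]
  field_simp

theorem tendsto_karamataTransform_polynomial (hΔ : IntegrableOn Δ (Ioi 0)) {v : ℝ}
    (hV : Tendsto (fun t => t * ∫ x in Ioi 0, exp (-(t * x)) * Δ x) atTop (𝓝 v))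
    (p : Polynomial ℝ) :
    Tendsto (karamataTransform Δ p.eval) atTop (𝓝 (v * ∫ y in (0)..1, p.eval y)) := by
  induction p using Polynomial.induction_on' with
  | add p q hp hq =>
    simp only [Polynomial.eval_add]
    rw [intervalIntegral.integral_add (p.continuous.intervalIntegrable _ _)
      (q.continuous.intervalIntegrable _ _), mul_add]
    refine (hp.add hq).congr' (eventually_ge_atTop 0 |>.mono fun t ht => ?_)
    simp only [karamataTransform, add_mul]
    rw [integral_add (integrableOn_karamata_integrand hΔ p.continuous ht)
      (integrableOn_karamata_integrand hΔ q.continuous ht), mul_add]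
  | monomial n a =>
    have hlim : v * ∫ y in (0)..1, a * y ^ n = a * (v / (n + 1)) := by
      rw [intervalIntegral.integral_const_mul, integral_pow]; simp; ring
    simp only [Polynomial.eval_monomial, hlim]
    refine ((tendsto_karamataTransform_pow hV n).const_mul a).congr fun t => ?_
    simp only [karamataTransform, mul_assoc, integral_const_mul]
    ring

theorem karamataCutoff_exp_neg_mul (ht : 0 < t) (x : ℝ) :
    karamataCutoff (exp (-(t * x))) * exp (-(t * x)) = (Iic t⁻¹).indicator 1 x := by
  have hx : exp (-1) ≤ exp (-(t * x)) ↔ x ≤ t⁻¹ := by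
    rw [exp_le_exp, neg_le_neg_iff, ← one_div, le_div_iff₀' ht]
  by_cases h : x ≤ t⁻¹
  · rw [karamataCutoff, indicator_of_mem (mem_Ici.2 (hx.2 h)), indicator_of_mem (mem_Iic.2 h),
      inv_mul_cancel₀ (exp_pos _).ne', Pi.one_apply]
  · rw [karamataCutoff, indicator_of_notMem (mt (hx.1 ∘ mem_Ici.1) h),
      indicator_of_notMem (mt mem_Iic.1 h), zero_mul]

theorem karamataCutoff_integrand_eq_indicator (ht : 0 < t) :
    (fun x => karamataCutoff (exp (-(t * x))) * exp (-(t * x)) * Δ x) = (Iic t⁻¹).indicator Δ := by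
  ext x
  rw [karamataCutoff_exp_neg_mul ht]
  by_cases h : x ∈ Iic t⁻¹ <;> simp [h]

theorem karamataTransform_cutoff (ht : 0 < t) :
    karamataTransform Δ karamataCutoff t = t * ∫ u in Ioc 0 t⁻¹, Δ u := by
  rw [karamataTransform, karamataCutoff_integrand_eq_indicator ht, setIntegral_indicator measurableSet_Iic,
    Ioi_inter_Iic]

theorem tendsto_karamataTransform_cutoff (hΔ : IntegrableOn Δ (Ioi 0)) (hΔ₀ : ∀ x, 0 ≤ Δ x)
    {v : ℝ} (hV : Tendsto (fun t => t * ∫ x in Ioi 0, exp (-(t * x)) * Δ x) atTop (𝓝 v)) :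
    Tendsto (karamataTransform Δ karamataCutoff) atTop (𝓝 v) := by
  have hv : 0 ≤ v := ge_of_tendsto hV (eventually_ge_atTop 0 |>.mono fun t ht =>
    mul_nonneg ht (setIntegral_nonneg measurableSet_Ioi fun x _ =>
      mul_nonneg (exp_pos _).le (hΔ₀ x)))
  refine Metric.tendsto_nhds.2 fun ε hε => ?_
  set ε' := ε / (2 * (v + 1))
  have hvε' : v * ε' < ε / 2 := by
    rw [show v * ε' = ε / 2 * (v / (v + 1)) by simp only [ε']; field_simp]
    exact mul_lt_of_lt_one_right (half_pos hε) ((div_lt_one (by linarith)).2 (by linarith))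
  obtain ⟨p, q, hpq, hp, hq⟩ := exists_polynomial_sandwich_karamataCutoff (ε := ε') (by positivity)
  have hvp := mul_le_mul_of_nonneg_left hp hv
  have hvq := mul_le_mul_of_nonneg_left hq hv
  filter_upwards [(tendsto_karamataTransform_polynomial hΔ hV p).eventually_const_lt
      (sub_lt_self _ (half_pos hε)),
    (tendsto_karamataTransform_polynomial hΔ hV q).eventually_lt_const
      (lt_add_of_pos_right _ (half_pos hε)), eventually_gt_atTop 0] with t hpt hqt ht
  have hcut : IntegrableOn (fun x => karamataCutoff (exp (-(t * x))) * exp (-(t * x)) * Δ x)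
      (Ioi 0) := by
    rw [karamataCutoff_integrand_eq_indicator ht]; exact hΔ.indicator measurableSet_Iic
  have hlow := karamataTransform_mono hΔ₀ (integrableOn_karamata_integrand hΔ p.continuous ht.le)
    hcut (fun y hy => (hpq y (Ioc_subset_Icc_self hy)).1) ht.le
  have hup := karamataTransform_mono hΔ₀ hcut
    (integrableOn_karamata_integrand hΔ q.continuous ht.le)
    (fun y hy => (hpq y (Ioc_subset_Icc_self hy)).2) ht.le
  rw [Real.dist_eq, abs_sub_lt_iff]
  constructor <;> linarith

theorem tendsto_integral_Ioc_div_of_tendsto_mul_integral_exp_neg (hΔ : IntegrableOn Δ (Ioi 0))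
    (hΔ₀ : ∀ x, 0 ≤ Δ x) {v : ℝ}
    (hV : Tendsto (fun t => t * ∫ x in Ioi 0, exp (-(t * x)) * Δ x) atTop (𝓝 v)) :
    Tendsto (fun x => (∫ u in Ioc 0 x, Δ u) / x) (𝓝[>] 0) (𝓝 v) := by
  refine ((tendsto_karamataTransform_cutoff hΔ hΔ₀ hV).comp tendsto_inv_nhdsGT_zero).congr' ?_
  filter_upwards [self_mem_nhdsWithin] with x (hx : 0 < x)
  rw [Function.comp_apply, karamataTransform_cutoff (inv_pos.2 hx), inv_inv, div_eq_inv_mul]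

end Karamata

theorem stmt16 (Δ : ℝ → ℝ) (hmeas : Measurable Δ) (hnonneg : ∀ x : ℝ, 0 ≤ Δ x)
    (hbdd : ∃ C : ℝ, ∀ x : ℝ, 0 < x → Δ x ≤ C)
    (hvanish : ∃ X : ℝ, 0 < X ∧ ∀ x : ℝ, X ≤ x → Δ x = 0)
    (V : ℝ → ℝ) (hV : ∀ t : ℝ, V t = t * ∫ x in Set.Ioi (0 : ℝ), Real.exp (-(t * x)) * Δ x)
    (D : ℝ → ℝ) (hD : ∀ x : ℝ, D x = ∫ u in Set.Ioc (0 : ℝ) x, Δ u)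
    (v : ℝ) :
    Tendsto V atTop (nhds v) ↔
      Tendsto (fun x : ℝ => D x / x) (nhdsWithin (0 : ℝ) (Set.Ioi (0 : ℝ))) (nhds v) := by
  obtain ⟨C, hC⟩ := hbdd
  obtain ⟨X, -, hX⟩ := hvanish
  have hC' : ∀ x, 0 < x → ‖Δ x‖ ≤ C := fun x hx => (norm_of_nonneg (hnonneg x)).trans_le (hC x hx)
  have hΔ : IntegrableOn Δ (Ioi 0) :=
    integrableOn_Ioi_zero_of_norm_le_of_eq_zero hmeas.aestronglyMeasurable hC' hX
  rw [funext hV, funext hD]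
  exact ⟨tendsto_integral_Ioc_div_of_tendsto_mul_integral_exp_neg hΔ hnonneg,
    tendsto_mul_integral_exp_neg_of_tendsto_div hΔ fun x hx => norm_integral_Ioc_zero_le hC' hx.le⟩
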